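/- Let d ≥ 2, let O ⊆ ℝ^d be open and d-regular, and let D ⊆ ℝ^d be (d−1)-regular. Then the sets D × ℝ, O × {0}, and O ⊥ D := (O × {0}) ∪ (D × ℝ), viewed as subsets of ℝ^{d+1}, are all d-regular: for each such set S there are constants 0 < a ≤ b with a·r^d ≤ H^d(B(z,r) ∩ S) ≤ b·r^d for every z ∈ S and every 0 < r ≤ 1, where H^d denotes d-dimensional Hausdorff measure on ℝ^{d+1} and B(z,r) is the open Euclidean ball in ℝ^{d+1}. -/

import Mathlib

/-!
Write `ι (x, t) = snocPt d x t`. It is `2`-Lipschitz and `1`-antilipschitz from `ℝ^d × ℝ` with the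
max metric, where balls are products of balls, so it suffices to prove that `D × ℝ` is
`d`-regular there. For the upper bound, a cover `(Uₙ)` of `A` gives a cover of `A × [c, c + L]`
by boxes `Uₙ × I` whose height is the diameter of `Uₙ`, hence
`μH[s + 1] (A × [c, c + L]) ≤ L * μH[s] A`.
The lower bound is the mass distribution principle for the product of `μH[d - 1]` restricted to
`D` with Lebesgue measure, whose mass in a set of diameter `δ` is `O(δ ^ d)` by the upper bound for
`D`. `O × {0}` is an isometric copy of `O`. For the union, the lower bounds are inherited from the
pieces, and the upper bound of each piece extends to centres outside it because `ℝ^(d+1)` is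
proper.
-/

open MeasureTheory Metric

/-- The embedding `ℝ^d × ℝ → ℝ^(d+1)`, `(x,t) ↦ (x,t)`. -/
def snocPt (d : ℕ) (x : EuclideanSpace ℝ (Fin d)) (t : ℝ) : EuclideanSpace ℝ (Fin (d + 1)) :=
  WithLp.toLp 2 (Fin.snoc (WithLp.ofLp x) t)

open Set Filter Topology
open scoped ENNReal NNReal

section Regularity

variable {X : Type*} [PseudoMetricSpace X] [MeasurableSpace X]

def LowerAhlforsRegular (μ : Measure X) (s a : ℝ) (S : Set X) : Prop :=
  ∀ x ∈ S, ∀ r : ℝ, 0 < r → r ≤ 1 → ENNReal.ofReal (a * r ^ s) ≤ μ (ball x r ∩ S)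

def UpperAhlforsRegular (μ : Measure X) (s b : ℝ) (S : Set X) : Prop :=
  ∀ x ∈ S, ∀ r : ℝ, 0 < r → r ≤ 1 → μ (ball x r ∩ S) ≤ ENNReal.ofReal (b * r ^ s)

def AhlforsRegular (μ : Measure X) (s : ℝ) (S : Set X) : Prop :=
  ∃ a b : ℝ, 0 < a ∧ a ≤ b ∧ ∀ x ∈ S, ∀ r : ℝ, 0 < r → r ≤ 1 →
    ENNReal.ofReal (a * r ^ s) ≤ μ (ball x r ∩ S) ∧ μ (ball x r ∩ S) ≤ ENNReal.ofReal (b * r ^ s)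

variable {μ : Measure X} {s a a' a₁ a₂ b b' : ℝ} {S T : Set X}

lemma UpperAhlforsRegular.mono (h : UpperAhlforsRegular μ s b S) (hbb' : b ≤ b') :
    UpperAhlforsRegular μ s b' S := fun x hx r hr hr1 =>
  (h x hx r hr hr1).trans
    (ENNReal.ofReal_le_ofReal (mul_le_mul_of_nonneg_right hbb' (Real.rpow_nonneg hr.le s)))

lemma LowerAhlforsRegular.ahlforsRegular (h : LowerAhlforsRegular μ s a S) (ha : 0 < a)
    (h' : UpperAhlforsRegular μ s b S) : AhlforsRegular μ s S :=
  ⟨a, max a b, ha, le_max_left a b, fun x hx r hr hr1 =>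
    ⟨h x hx r hr hr1, h'.mono (le_max_right a b) x hx r hr hr1⟩⟩

lemma LowerAhlforsRegular.mono (h : LowerAhlforsRegular μ s a S) (ha : a' ≤ a) :
    LowerAhlforsRegular μ s a' S := fun x hx r hr hr1 =>
  (ENNReal.ofReal_le_ofReal (mul_le_mul_of_nonneg_right ha (Real.rpow_nonneg hr.le s))).trans
    (h x hx r hr hr1)

lemma LowerAhlforsRegular.union (h₁ : LowerAhlforsRegular μ s a₁ S)
    (h₂ : LowerAhlforsRegular μ s a₂ T) : LowerAhlforsRegular μ s (min a₁ a₂) (S ∪ T) := by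
  rintro x (hx | hx) r hr hr1
  · exact (h₁.mono (min_le_left _ _) x hx r hr hr1).trans
      (measure_mono (inter_subset_inter_right _ subset_union_left))
  · exact (h₂.mono (min_le_right _ _) x hx r hr hr1).trans
      (measure_mono (inter_subset_inter_right _ subset_union_right))

lemma UpperAhlforsRegular.measure_ball_inter_le (h : UpperAhlforsRegular μ s b S) (z : X)
    {r : ℝ} (hr : 0 < r) (hr1 : 2 * r ≤ 1) :
    μ (ball z r ∩ S) ≤ ENNReal.ofReal (b * (2 * r) ^ s) := by
  rcases eq_empty_or_nonempty (ball z r ∩ S) with he | ⟨w, hwz, hwS⟩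
  · simp [he]
  refine (measure_mono (inter_subset_inter_left _ fun y hy => ?_)).trans
    (h w hwS (2 * r) (by positivity) hr1)
  rw [mem_ball] at hy hwz ⊢
  linarith [dist_triangle y z w, dist_comm w z]

end Regularity

section Proper

variable {E : Type*} [NormedAddCommGroup E] [ProperSpace E] [MeasurableSpace E]
  {μ : Measure E} {s b b₁ b₂ : ℝ} {S T : Set E}

lemma exists_measure_closedBall_inter_le (μ : Measure E) (R : ℝ) :
    ∃ N : ℕ, ∀ (z : E) (S : Set E) (c : ℝ≥0∞), (∀ w ∈ S, μ (ball w 1 ∩ S) ≤ c) →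
      μ (closedBall z R ∩ S) ≤ N * c := by
  obtain ⟨F, hF⟩ := (isCompact_closedBall (0 : E) R).elim_finite_subcover
    (fun y : E => ball y (1 / 2)) (fun _ => isOpen_ball)
    (fun z _ => mem_iUnion.2 ⟨z, mem_ball_self (by norm_num)⟩)
  refine ⟨F.card, fun z S c hS => ?_⟩
  have hcover : closedBall z R ∩ S ⊆ ⋃ y ∈ F, ball (z + y) (1 / 2) ∩ S := by
    rintro u ⟨hu, huS⟩
    obtain ⟨y, hyF, hy⟩ := mem_iUnion₂.1 (hF (show u - z ∈ closedBall (0 : E) R by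
      simpa [dist_eq_norm] using hu))
    refine mem_iUnion₂.2 ⟨y, hyF, ?_, huS⟩
    rw [mem_ball, dist_eq_norm] at hy ⊢
    rwa [sub_sub] at hy
  have hpiece (y : E) : μ (ball (z + y) (1 / 2) ∩ S) ≤ c := by
    rcases eq_empty_or_nonempty (ball (z + y) (1 / 2) ∩ S) with he | ⟨w, hw, hwS⟩
    · simp only [he, measure_empty, zero_le]
    refine (measure_mono (inter_subset_inter_left _ fun u hu => ?_)).trans (hS w hwS)
    rw [mem_ball] at hu hw ⊢
    linarith [dist_triangle u (z + y) w, dist_comm w (z + y)]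
  calc μ (closedBall z R ∩ S) ≤ ∑ y ∈ F, μ (ball (z + y) (1 / 2) ∩ S) :=
        (measure_mono hcover).trans (measure_biUnion_finset_le F _)
    _ ≤ ∑ _y ∈ F, c := Finset.sum_le_sum fun y _ => hpiece y
    _ = F.card * c := by rw [Finset.sum_const, nsmul_eq_mul]

lemma UpperAhlforsRegular.exists_forall_measure_ball_inter_le
    (h : UpperAhlforsRegular μ s b S) (hs : 0 ≤ s) (hb : 0 ≤ b) :
    ∃ b' : ℝ, 0 ≤ b' ∧ ∀ (z : E) (r : ℝ), 0 < r → r ≤ 1 →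
      μ (ball z r ∩ S) ≤ ENNReal.ofReal (b' * r ^ s) := by
  -- radii `r ≤ 1/2` are handled around a point of `S` at radius `2 * r`, larger ones by covering
  -- `closedBall z 1` with finitely many balls of radius `1/2`
  obtain ⟨N, hN⟩ := exists_measure_closedBall_inter_le μ 1
  refine ⟨2 ^ s * (N + 1) * b, by positivity, fun z r hr hr1 => ?_⟩
  have hN1 : (1 : ℝ) ≤ N + 1 := by linarith [N.cast_nonneg (α := ℝ)]
  rcases le_or_gt r (1 / 2) with hr2 | hr2
  · refine (h.measure_ball_inter_le z hr (by linarith)).trans (ENNReal.ofReal_le_ofReal ?_)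
    rw [Real.mul_rpow zero_le_two hr.le]
    have : 0 ≤ b * (2 ^ s * r ^ s) := by positivity
    nlinarith
  · have hball : μ (closedBall z 1 ∩ S) ≤ N * ENNReal.ofReal b :=
      hN z S _ fun w hw => by simpa using h w hw 1 one_pos le_rfl
    refine (measure_mono (inter_subset_inter_left _ (ball_subset_closedBall.trans
      (closedBall_subset_closedBall hr1)))).trans (hball.trans ?_)
    rw [← ENNReal.ofReal_natCast, ← ENNReal.ofReal_mul (by positivity)]
    refine ENNReal.ofReal_le_ofReal ?_
    have h2r : 1 ≤ 2 ^ s * r ^ s := by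
      rw [← Real.mul_rpow zero_le_two hr.le]
      exact Real.one_le_rpow (by linarith) hs
    nlinarith [mul_le_mul_of_nonneg_left h2r (by positivity : (0 : ℝ) ≤ (N + 1) * b)]

lemma UpperAhlforsRegular.union (h₁ : UpperAhlforsRegular μ s b₁ S)
    (h₂ : UpperAhlforsRegular μ s b₂ T) (hs : 0 ≤ s) (hb₁ : 0 ≤ b₁) (hb₂ : 0 ≤ b₂) :
    ∃ b, UpperAhlforsRegular μ s b (S ∪ T) := by
  obtain ⟨b₁', hb₁', hS⟩ := h₁.exists_forall_measure_ball_inter_le hs hb₁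
  obtain ⟨b₂', hb₂', hT⟩ := h₂.exists_forall_measure_ball_inter_le hs hb₂
  refine ⟨b₁' + b₂', fun z _ r hr hr1 => ?_⟩
  calc μ (ball z r ∩ (S ∪ T)) ≤ μ (ball z r ∩ S) + μ (ball z r ∩ T) := by
        rw [inter_union_distrib_left]
        exact measure_union_le _ _
    _ ≤ ENNReal.ofReal (b₁' * r ^ s) + ENNReal.ofReal (b₂' * r ^ s) :=
        add_le_add (hS z r hr hr1) (hT z r hr hr1)
    _ = ENNReal.ofReal ((b₁' + b₂') * r ^ s) := by
        rw [← ENNReal.ofReal_add (by positivity) (by positivity), add_mul]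

end Proper

lemma AntilipschitzWith.ball_inter_image_subset {X Y : Type*} [PseudoMetricSpace X]
    [PseudoMetricSpace Y] {f : X → Y} (hf : AntilipschitzWith 1 f) (x : X) (r : ℝ)
    (S : Set X) : ball (f x) r ∩ f '' S ⊆ f '' (ball x r ∩ S) := by
  rintro _ ⟨hy, y, hyS, rfl⟩
  refine ⟨y, ⟨?_, hyS⟩, rfl⟩
  rw [mem_ball] at hy ⊢
  simpa using (hf.le_mul_dist y x).trans_lt (by simpa using hy)

section Lipschitz

variable {X Y : Type*} [MetricSpace X] [MeasurableSpace X] [BorelSpace X]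
  [MetricSpace Y] [MeasurableSpace Y] [BorelSpace Y] {f : X → Y} {K : ℝ≥0} {s a b : ℝ}
  {S : Set X}

lemma LowerAhlforsRegular.image (h : LowerAhlforsRegular μH[s] s a S) (hs : 0 ≤ s)
    (hf : LipschitzWith K f) (hf' : AntilipschitzWith 1 f) (hK : 1 ≤ K) :
    LowerAhlforsRegular μH[s] s (a / (K : ℝ) ^ s) (f '' S) := by
  rintro _ ⟨x, hx, rfl⟩ r hr hr1
  have hK0 : (0 : ℝ) < K := by exact_mod_cast zero_lt_one.trans_le hK
  have hrK : r / K ≤ r := div_le_self hr.le (by exact_mod_cast hK)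
  have hsub : f '' (ball x (r / K) ∩ S) ⊆ ball (f x) r ∩ f '' S := by
    rintro _ ⟨y, ⟨hy, hyS⟩, rfl⟩
    refine ⟨?_, mem_image_of_mem f hyS⟩
    rw [mem_ball] at hy ⊢
    calc dist (f y) (f x) ≤ K * dist y x := hf.dist_le_mul y x
      _ < K * (r / K) := by gcongr
      _ = r := by field_simp
  calc ENNReal.ofReal (a / (K : ℝ) ^ s * r ^ s) = ENNReal.ofReal (a * (r / K) ^ s) := by
        rw [Real.div_rpow hr.le hK0.le]
        ring_nf
    _ ≤ μH[s] (ball x (r / K) ∩ S) := h x hx _ (by positivity) (hrK.trans hr1)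
    _ ≤ μH[s] (f '' (ball x (r / K) ∩ S)) := by
        simpa using hf'.le_hausdorffMeasure_image hs (ball x (r / K) ∩ S)
    _ ≤ μH[s] (ball (f x) r ∩ f '' S) := measure_mono hsub

lemma UpperAhlforsRegular.image (h : UpperAhlforsRegular μH[s] s b S) (hs : 0 ≤ s)
    (hf : LipschitzWith K f) (hf' : AntilipschitzWith 1 f) :
    UpperAhlforsRegular μH[s] s ((K : ℝ) ^ s * b) (f '' S) := by
  rintro _ ⟨x, hx, rfl⟩ r hr hr1
  calc μH[s] (ball (f x) r ∩ f '' S) ≤ μH[s] (f '' (ball x r ∩ S)) :=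
        measure_mono (hf'.ball_inter_image_subset x r S)
    _ ≤ (K : ℝ≥0∞) ^ s * μH[s] (ball x r ∩ S) := hf.hausdorffMeasure_image_le hs _
    _ ≤ ENNReal.ofReal ((K : ℝ) ^ s) * ENNReal.ofReal (b * r ^ s) := by
        rw [← ENNReal.ofReal_coe_nnreal, ENNReal.ofReal_rpow_of_nonneg K.coe_nonneg hs]
        gcongr
        exact h x hx r hr hr1
    _ = ENNReal.ofReal ((K : ℝ) ^ s * b * r ^ s) := by
        rw [mul_assoc, ENNReal.ofReal_mul (p := (K : ℝ) ^ s) (by positivity)]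

end Lipschitz

lemma ediam_prod_le {X Y : Type*} [PseudoEMetricSpace X] [PseudoEMetricSpace Y]
    (U : Set X) (V : Set Y) : ediam (U ×ˢ V) ≤ max (ediam U) (ediam V) :=
  ediam_le fun p hp q hq => by
    rw [Prod.edist_eq]
    exact max_le_max (edist_le_ediam_of_mem hp.1 hq.1) (edist_le_ediam_of_mem hp.2 hq.2)

lemma Icc_subset_iUnion_Icc (c : ℝ) {L w : ℝ} (hw : 0 < w) :
    Icc c (c + L) ⊆ ⋃ k : Fin (⌊L / w⌋₊ + 1), Icc (c + k * w) (c + (k + 1) * w) := by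
  intro t ht
  have hq : 0 ≤ (t - c) / w := div_nonneg (by linarith [ht.1]) hw.le
  have hk : ⌊(t - c) / w⌋₊ < ⌊L / w⌋₊ + 1 :=
    Nat.lt_succ_of_le (Nat.floor_mono (div_le_div_of_nonneg_right (by linarith [ht.2]) hw.le))
  have hlo := (le_div_iff₀ hw).1 (Nat.floor_le hq)
  have hhi := (div_lt_iff₀ hw).1 (Nat.lt_floor_add_one ((t - c) / w))
  exact mem_iUnion.2 ⟨⟨_, hk⟩, by simp only; linarith, by simp only; linarith⟩

section Covers

variable {X : Type*} [PseudoEMetricSpace X]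

lemma exists_cover_prod_Icc (U : Set X) (c : ℝ) {L w s : ℝ} (hL : 0 ≤ L) (hw : 0 < w) (hs : 0 ≤ s)
    (hU : ediam U ≤ ENNReal.ofReal w) :
    ∃ (K : ℕ) (P : Fin K → Set (X × ℝ)), U ×ˢ Icc c (c + L) ⊆ ⋃ k, P k ∧
      (∀ k, ediam (P k) ≤ ENNReal.ofReal w) ∧
      ∑ k, ediam (P k) ^ (s + 1) ≤ ENNReal.ofReal ((L + w) * w ^ s) := by
  have hdiam (k : ℕ) :
      ediam (U ×ˢ Icc (c + k * w) (c + (k + 1) * w)) ≤ ENNReal.ofReal w := by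
    refine (ediam_prod_le _ _).trans (max_le hU (le_of_eq ?_))
    rw [Real.ediam_Icc]
    ring_nf
  refine ⟨⌊L / w⌋₊ + 1, fun k => U ×ˢ Icc (c + k * w) (c + (k + 1) * w),
    (prod_mono subset_rfl (Icc_subset_iUnion_Icc c hw)).trans prod_iUnion.subset,
    fun k => hdiam k, ?_⟩
  have hK : ((⌊L / w⌋₊ + 1 : ℕ) : ℝ) ≤ L / w + 1 := by
    push_cast
    linarith [Nat.floor_le (div_nonneg hL hw.le)]
  calc ∑ k : Fin (⌊L / w⌋₊ + 1), ediam (U ×ˢ Icc (c + k * w) (c + (k + 1) * w)) ^ (s + 1)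
      ≤ ∑ _k : Fin (⌊L / w⌋₊ + 1), ENNReal.ofReal w ^ (s + 1) :=
        Finset.sum_le_sum fun k _ => ENNReal.rpow_le_rpow (hdiam k) (by linarith)
    _ = ENNReal.ofReal ((⌊L / w⌋₊ + 1 : ℕ) * w ^ (s + 1)) := by
        rw [Finset.sum_const, Finset.card_univ, Fintype.card_fin, nsmul_eq_mul,
          ENNReal.ofReal_rpow_of_nonneg hw.le (by linarith), ENNReal.ofReal_mul (by positivity),
          ENNReal.ofReal_natCast]
    _ ≤ ENNReal.ofReal ((L + w) * w ^ s) := by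
        refine ENNReal.ofReal_le_ofReal ?_
        calc ((⌊L / w⌋₊ + 1 : ℕ) : ℝ) * w ^ (s + 1) ≤ (L / w + 1) * (w ^ s * w) := by
              rw [Real.rpow_add_one hw.ne']
              gcongr
          _ = (L + w) * w ^ s := by field_simp

lemma exists_cover_prod_Icc_tsum_le {A : Set X} {U : ℕ → Set X} (hAU : A ⊆ ⋃ n, U n)
    {δ : ℝ} (hδ : 0 < δ) (hδ1 : δ ≤ 1) (hUδ : ∀ n, ediam (U n) ≤ ENNReal.ofReal δ)
    {s : ℝ} (hs : 1 ≤ s) (c : ℝ) {L : ℝ} (hL : 0 ≤ L) :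
    ∃ (K : ℕ → ℕ) (P : (Σ n, Fin (K n)) → Set (X × ℝ)), A ×ˢ Icc c (c + L) ⊆ ⋃ i, P i ∧
      (∀ i, ediam (P i) ≤ ENNReal.ofReal δ) ∧
      ∑' i, ediam (P i) ^ (s + 1) ≤
        ENNReal.ofReal (L + δ) * (∑' n, ediam (U n) ^ s + ENNReal.ofReal δ) := by
  -- pad the diameters by a summable sequence, so that every row of boxes has positive height
  set η : ℕ → ℝ := fun n => δ / 2 / 2 ^ n
  set w : ℕ → ℝ := fun n => max (ediam (U n)).toReal (η n)
  have hη (n : ℕ) : 0 < η n := by positivity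
  have hηδ (n : ℕ) : η n ≤ δ :=
    (div_le_self (by positivity) (one_le_pow₀ one_le_two)).trans (half_le_self hδ.le)
  have hUfin (n : ℕ) : ediam (U n) ≠ ∞ := ne_top_of_le_ne_top ENNReal.ofReal_ne_top (hUδ n)
  have hw (n : ℕ) : 0 < w n := lt_max_of_lt_right (hη n)
  have hwδ (n : ℕ) : w n ≤ δ :=
    max_le (ENNReal.toReal_le_of_le_ofReal hδ.le (hUδ n)) (hηδ n)
  have hUw (n : ℕ) : ediam (U n) ≤ ENNReal.ofReal (w n) :=
    (ENNReal.le_ofReal_iff_toReal_le (hUfin n) (hw n).le).2 (le_max_left _ _)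
  have hrow (n : ℕ) : ENNReal.ofReal ((L + w n) * w n ^ s) ≤
      ENNReal.ofReal (L + δ) * (ediam (U n) ^ s + ENNReal.ofReal (η n)) := by
    have hws : w n ^ s ≤ (ediam (U n)).toReal ^ s + η n := by
      have hηs : η n ^ s ≤ η n := Real.rpow_le_self_of_le_one (hη n).le ((hηδ n).trans hδ1) hs
      rcases max_cases (ediam (U n)).toReal (η n) with ⟨h, -⟩ | ⟨h, -⟩ <;>
        simp only [w, h] <;> linarith [Real.rpow_nonneg (hη n).le s,
          Real.rpow_nonneg (ENNReal.toReal_nonneg (a := ediam (U n))) s]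
    rw [ENNReal.ofReal_mul (by linarith [hw n]), ← ENNReal.ofReal_toReal (hUfin n),
      ENNReal.ofReal_rpow_of_nonneg ENNReal.toReal_nonneg (by linarith),
      ← ENNReal.ofReal_add (by positivity) (hη n).le]
    gcongr
    exact hwδ n
  choose K P hcov hdiam hsum using fun n =>
    exists_cover_prod_Icc (U n) c (s := s) hL (hw n) (by linarith) (hUw n)
  refine ⟨K, fun i => P i.1 i.2, ?_, fun i => (hdiam i.1 i.2).trans
    (ENNReal.ofReal_le_ofReal (hwδ i.1)), ?_⟩
  · rintro ⟨x, t⟩ ⟨hx, ht⟩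
    obtain ⟨n, hn⟩ := mem_iUnion.1 (hAU hx)
    obtain ⟨k, hk⟩ := mem_iUnion.1 (hcov n ⟨hn, ht⟩)
    exact mem_iUnion.2 ⟨⟨n, k⟩, hk⟩
  calc ∑' i : Σ n, Fin (K n), ediam (P i.1 i.2) ^ (s + 1)
      = ∑' n, ∑ k, ediam (P n k) ^ (s + 1) := by
        rw [ENNReal.tsum_sigma']
        simp only [tsum_fintype]
    _ ≤ ∑' n, ENNReal.ofReal (L + δ) * (ediam (U n) ^ s + ENNReal.ofReal (η n)) :=
        ENNReal.tsum_le_tsum fun n => (hsum n).trans (hrow n)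
    _ = ENNReal.ofReal (L + δ) * (∑' n, ediam (U n) ^ s + ENNReal.ofReal δ) := by
        rw [ENNReal.tsum_mul_left, ENNReal.tsum_add,
          ← ENNReal.ofReal_tsum_of_nonneg (fun n => (hη n).le) (summable_geometric_two' δ),
          tsum_geometric_two']

end Covers

section Hausdorff

variable {X : Type*} [EMetricSpace X] [MeasurableSpace X] [BorelSpace X]

lemma exists_cover_tsum_ediam_rpow_lt {A : Set X} {s : ℝ} (hs : 0 < s) {c : ℝ≥0∞}
    (hA : μH[s] A < c) {δ : ℝ≥0∞} (hδ : 0 < δ) :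
    ∃ U : ℕ → Set X, A ⊆ ⋃ n, U n ∧ (∀ n, ediam (U n) ≤ δ) ∧ ∑' n, ediam (U n) ^ s < c := by
  rw [Measure.hausdorffMeasure_apply] at hA
  obtain ⟨U, hAU, hUδ, hsum⟩ := by
    simpa only [iInf_lt_iff, exists_prop] using (le_iSup₂ (f := fun r _ => _) δ hδ).trans_lt hA
  refine ⟨U, hAU, hUδ, lt_of_eq_of_lt (tsum_congr fun n => ?_) hsum⟩
  rcases (U n).eq_empty_or_nonempty with h | h
  · simp [h, ENNReal.zero_rpow_of_pos hs]
  · simp [h]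

theorem hausdorffMeasure_prod_Icc_le {s : ℝ} (hs : 1 ≤ s) (A : Set X) (c : ℝ) {L : ℝ}
    (hL : 0 < L) : μH[s + 1] (A ×ˢ Icc c (c + L)) ≤ ENNReal.ofReal L * μH[s] A := by
  set M := μH[s] A
  rcases eq_top_or_lt_top M with hM | hM
  · rw [hM, ENNReal.mul_top (by simpa using hL)]
    exact le_top
  set δ : ℕ → ℝ := fun m => 1 / (m + 1)
  have hδ (m : ℕ) : 0 < δ m := by positivity
  have hδ1 (m : ℕ) : δ m ≤ 1 := by
    simp only [δ]
    rw [div_le_one (by positivity)]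
    simp
  have hδ0 : Tendsto δ atTop (𝓝 0) := tendsto_one_div_add_atTop_nhds_zero_nat
  have hδ0' : Tendsto (fun m => ENNReal.ofReal (δ m)) atTop (𝓝 0) := by
    simpa using ENNReal.tendsto_ofReal hδ0
  choose U hAU hUδ hUsum using fun m =>
    exists_cover_tsum_ediam_rpow_lt (by linarith : 0 < s)
      (ENNReal.lt_add_right hM.ne (ENNReal.ofReal_pos.2 (hδ m)).ne') (ENNReal.ofReal_pos.2 (hδ m))
  choose K P hcov hdiam hsum using fun m =>
    exists_cover_prod_Icc_tsum_le (hAU m) (hδ m) (hδ1 m) (hUδ m) hs c hL.le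
  have hlim : Tendsto (fun m => ENNReal.ofReal (L + δ m) *
      (M + ENNReal.ofReal (δ m) + ENNReal.ofReal (δ m))) atTop (𝓝 (ENNReal.ofReal L * M)) := by
    have hL' : Tendsto (fun m => ENNReal.ofReal (L + δ m)) atTop (𝓝 (ENNReal.ofReal L)) := by
      simpa using ENNReal.tendsto_ofReal (tendsto_const_nhds.add hδ0)
    simpa using ENNReal.Tendsto.mul hL' (Or.inl (by simpa using hL))
      ((tendsto_const_nhds.add hδ0').add hδ0') (Or.inr ENNReal.ofReal_ne_top)
  calc μH[s + 1] (A ×ˢ Icc c (c + L))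
      ≤ liminf (fun m => ∑' i, ediam (P m i) ^ (s + 1)) atTop :=
        Measure.hausdorffMeasure_le_liminf_tsum _ _ _ hδ0' P (Eventually.of_forall hdiam)
          (Eventually.of_forall hcov)
    _ ≤ liminf (fun m => ENNReal.ofReal (L + δ m) *
          (M + ENNReal.ofReal (δ m) + ENNReal.ofReal (δ m))) atTop :=
        liminf_le_liminf <| Eventually.of_forall fun m =>
          (hsum m).trans (by gcongr; exact (hUsum m).le)
    _ = ENNReal.ofReal L * M := hlim.liminf_eq

end Hausdorff

lemma ball_inter_prod_univ {X : Type*} [PseudoMetricSpace X] (x : X) (t r : ℝ) (D : Set X) :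
    ball (x, t) r ∩ D ×ˢ univ = (ball x r ∩ D) ×ˢ ball t r := by
  rw [← ball_prod_same, prod_inter_prod, inter_univ]

section ProdUniv

variable {X : Type*} [MetricSpace X] [MeasurableSpace X] [BorelSpace X] {s a b : ℝ} {D : Set X}

theorem UpperAhlforsRegular.prod_univ (h : UpperAhlforsRegular μH[s] s b D) (hs : 1 ≤ s) :
    UpperAhlforsRegular μH[s + 1] (s + 1) (2 * b) (D ×ˢ (univ : Set ℝ)) := by
  rintro ⟨x, t⟩ ⟨hx, -⟩ r hr hr1
  have hsub : ball (x, t) r ∩ D ×ˢ univ ⊆ (ball x r ∩ D) ×ˢ Icc (t - r) (t - r + 2 * r) := by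
    rw [ball_inter_prod_univ]
    refine prod_mono subset_rfl (ball_subset_closedBall.trans (le_of_eq ?_))
    rw [Real.closedBall_eq_Icc]
    ring_nf
  calc μH[s + 1] (ball (x, t) r ∩ D ×ˢ univ)
      ≤ ENNReal.ofReal (2 * r) * μH[s] (ball x r ∩ D) :=
        (measure_mono hsub).trans (hausdorffMeasure_prod_Icc_le hs _ _ (by positivity))
    _ ≤ ENNReal.ofReal (2 * r) * ENNReal.ofReal (b * r ^ s) := by
        gcongr
        exact h x hx r hr hr1
    _ = ENNReal.ofReal (2 * b * r ^ (s + 1)) := by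
        rw [← ENNReal.ofReal_mul (by positivity), Real.rpow_add_one hr.ne']
        ring_nf

lemma UpperAhlforsRegular.restrict_prod_volume_le (h : UpperAhlforsRegular μH[s] s b D) (hs : 0 ≤ s)
    {T : Set (X × ℝ)} (hT : ediam T ≤ ENNReal.ofReal (1 / 3)) :
    (μH[s].restrict D).prod volume T ≤ ENNReal.ofReal (2 * 3 ^ s * b) * ediam T ^ (s + 1) := by
  rcases T.eq_empty_or_nonempty with rfl | ⟨p, hp⟩
  · simp
  have hTfin : ediam T ≠ ∞ := ne_top_of_le_ne_top ENNReal.ofReal_ne_top hT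
  set δ := (ediam T).toReal
  have hδ0 : 0 ≤ δ := ENNReal.toReal_nonneg
  have hδ3 : 3 * δ ≤ 1 := by
    have := ENNReal.toReal_le_of_le_ofReal (by norm_num) hT
    linarith
  have hTsub : T ⊆ closedBall p.1 δ ×ˢ closedBall p.2 δ := by
    rw [closedBall_prod_same]
    intro q hq
    rw [mem_closedBall, dist_edist]
    exact ENNReal.toReal_mono hTfin (edist_le_ediam_of_mem hq hp)
  calc (μH[s].restrict D).prod volume T
      ≤ μH[s] (closedBall p.1 δ ∩ D) * ENNReal.ofReal (2 * δ) := by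
        refine (measure_mono hTsub).trans (le_of_eq ?_)
        rw [Measure.prod_prod, Measure.restrict_apply measurableSet_closedBall,
          Real.volume_closedBall]
    _ ≤ ENNReal.ofReal (b * (3 * δ) ^ s) * ENNReal.ofReal (2 * δ) := by
        rcases hδ0.eq_or_lt with hδ0 | hδ0
        · simp [← hδ0]
        gcongr
        refine (measure_mono (inter_subset_inter_left _
          (closedBall_subset_ball (by linarith : δ < 3 * δ / 2)))).trans ?_
        have := h.measure_ball_inter_le p.1 (r := 3 * δ / 2) (by linarith) (by linarith)
        rwa [show 2 * (3 * δ / 2) = 3 * δ by ring] at this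
    _ = ENNReal.ofReal (2 * 3 ^ s * b) * ediam T ^ (s + 1) := by
        rw [← ENNReal.ofReal_mul' (by positivity), ← ENNReal.ofReal_toReal hTfin,
          ENNReal.ofReal_rpow_of_nonneg hδ0 (by linarith), ← ENNReal.ofReal_mul' (by positivity),
          Real.mul_rpow (by norm_num) hδ0, Real.rpow_add' hδ0 (by linarith), Real.rpow_one]
        congr 1
        ring

theorem LowerAhlforsRegular.prod_univ (ha : LowerAhlforsRegular μH[s] s a D)
    (hb : UpperAhlforsRegular μH[s] s b D) (hs : 0 ≤ s) (hb0 : 0 < b) :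
    LowerAhlforsRegular μH[s + 1] (s + 1) (a / (3 ^ s * b)) (D ×ˢ (univ : Set ℝ)) := by
  set C := 2 * 3 ^ s * b
  have hC : 0 < C := by positivity
  set ν := (μH[s].restrict D).prod (volume : Measure ℝ)
  have hνμ : (ENNReal.ofReal C)⁻¹ • ν ≤ μH[s + 1] := by
    refine Measure.le_hausdorffMeasure _ _ (ENNReal.ofReal (1 / 3)) (by norm_num) fun T hT => ?_
    rw [Measure.smul_apply, smul_eq_mul, ENNReal.inv_mul_le_iff (by simpa using hC)
      ENNReal.ofReal_ne_top]
    exact hb.restrict_prod_volume_le hs hT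
  rintro ⟨x, t⟩ ⟨hx, -⟩ r hr hr1
  calc ENNReal.ofReal (a / (3 ^ s * b) * r ^ (s + 1))
      = (ENNReal.ofReal C)⁻¹ * (ENNReal.ofReal (a * r ^ s) * ENNReal.ofReal (2 * r)) := by
        rw [← ENNReal.ofReal_mul' (by positivity), ← ENNReal.ofReal_inv_of_pos hC,
          ← ENNReal.ofReal_mul (by positivity), Real.rpow_add_one hr.ne']
        congr 1
        field_simp
        ring
    _ ≤ (ENNReal.ofReal C)⁻¹ * ν (ball (x, t) r ∩ D ×ˢ univ) := by
        rw [ball_inter_prod_univ, Measure.prod_prod, Real.volume_ball]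
        gcongr
        refine (ha x hx r hr hr1).trans ?_
        simpa [inter_assoc] using Measure.le_restrict_apply D (ball x r ∩ D)
    _ ≤ μH[s + 1] (ball (x, t) r ∩ D ×ˢ univ) := hνμ _

end ProdUniv

section SnocPt

variable {d : ℕ}

lemma dist_snocPt (x y : EuclideanSpace ℝ (Fin d)) (s t : ℝ) :
    dist (snocPt d x s) (snocPt d y t) = √(dist x y ^ 2 + dist s t ^ 2) := by
  rw [EuclideanSpace.dist_eq, EuclideanSpace.dist_eq, Fin.sum_univ_castSucc,
    Real.sq_sqrt (by positivity)]
  simp [snocPt, Real.dist_eq, sq_abs]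

lemma lipschitzWith_snocPt :
    LipschitzWith 2 (fun p : EuclideanSpace ℝ (Fin d) × ℝ => snocPt d p.1 p.2) :=
  LipschitzWith.of_dist_le_mul fun p q => by
    rw [dist_snocPt, Prod.dist_eq, Real.sqrt_le_iff, NNReal.coe_ofNat]
    refine ⟨by positivity, ?_⟩
    nlinarith [pow_le_pow_left₀ dist_nonneg (le_max_left (dist p.1 q.1) (dist p.2 q.2)) 2,
      pow_le_pow_left₀ dist_nonneg (le_max_right (dist p.1 q.1) (dist p.2 q.2)) 2]

lemma antilipschitzWith_snocPt :
    AntilipschitzWith 1 (fun p : EuclideanSpace ℝ (Fin d) × ℝ => snocPt d p.1 p.2) :=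
  AntilipschitzWith.of_le_mul_dist fun p q => by
    rw [dist_snocPt, Prod.dist_eq, NNReal.coe_one, one_mul]
    exact max_le
      (Real.le_sqrt_of_sq_le (le_add_of_nonneg_right (sq_nonneg _)))
      (Real.le_sqrt_of_sq_le (le_add_of_nonneg_left (sq_nonneg _)))

lemma isometry_snocPt_zero : Isometry (fun x : EuclideanSpace ℝ (Fin d) => snocPt d x 0) :=
  Isometry.of_dist_eq fun x y => by
    rw [dist_snocPt, dist_self, zero_pow two_ne_zero, add_zero, Real.sqrt_sq dist_nonneg]

end SnocPt

theorem perp_sets_d_regular_general (d : ℕ) (hd : 2 ≤ d)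
    (O : Set (EuclideanSpace ℝ (Fin d)))
    (aO bO : ℝ) (haO : 0 < aO) (habO : aO ≤ bO)
    (hOreg : ∀ x ∈ O, ∀ r : ℝ, 0 < r → r ≤ 1 →
      ENNReal.ofReal (aO * r ^ (d : ℝ)) ≤ μH[(d : ℝ)] (ball x r ∩ O) ∧
      μH[(d : ℝ)] (ball x r ∩ O) ≤ ENNReal.ofReal (bO * r ^ (d : ℝ)))
    (D : Set (EuclideanSpace ℝ (Fin d)))
    (aD bD : ℝ) (haD : 0 < aD) (habD : aD ≤ bD)
    (hDreg : ∀ x ∈ D, ∀ r : ℝ, 0 < r → r ≤ 1 →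
      ENNReal.ofReal (aD * r ^ ((d : ℝ) - 1)) ≤ μH[(d : ℝ) - 1] (ball x r ∩ D) ∧
      μH[(d : ℝ) - 1] (ball x r ∩ D) ≤ ENNReal.ofReal (bD * r ^ ((d : ℝ) - 1))) :
    ∀ S : Set (EuclideanSpace ℝ (Fin (d + 1))),
      (S = {z | ∃ x ∈ D, ∃ t : ℝ, snocPt d x t = z} ∨
       S = {z | ∃ x ∈ O, snocPt d x 0 = z} ∨
       S = {z | ∃ x ∈ O, snocPt d x 0 = z} ∪ {z | ∃ x ∈ D, ∃ t : ℝ, snocPt d x t = z}) →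
      ∃ a b : ℝ, 0 < a ∧ a ≤ b ∧
        ∀ z ∈ S, ∀ r : ℝ, 0 < r → r ≤ 1 →
          ENNReal.ofReal (a * r ^ (d : ℝ)) ≤ μH[(d : ℝ)] (ball z r ∩ S) ∧
          μH[(d : ℝ)] (ball z r ∩ S) ≤ ENNReal.ofReal (b * r ^ (d : ℝ)) := by
  have hs : (1 : ℝ) ≤ (d : ℝ) - 1 := by
    have : (2 : ℝ) ≤ d := by exact_mod_cast hd
    linarith
  have hbO : 0 < bO := haO.trans_le habO
  have hbD : 0 < bD := haD.trans_le habD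
  have hD₁ : LowerAhlforsRegular μH[(d : ℝ) - 1] ((d : ℝ) - 1) aD D :=
    fun x hx r hr hr1 => (hDreg x hx r hr hr1).1
  have hD₂ : UpperAhlforsRegular μH[(d : ℝ) - 1] ((d : ℝ) - 1) bD D :=
    fun x hx r hr hr1 => (hDreg x hx r hr hr1).2
  have hO₁ : LowerAhlforsRegular μH[(d : ℝ)] d aO O := fun x hx r hr hr1 => (hOreg x hx r hr hr1).1
  have hO₂ : UpperAhlforsRegular μH[(d : ℝ)] d bO O := fun x hx r hr hr1 => (hOreg x hx r hr hr1).2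
  have htube : {z | ∃ x ∈ D, ∃ t : ℝ, snocPt d x t = z} =
      (fun p : EuclideanSpace ℝ (Fin d) × ℝ => snocPt d p.1 p.2) '' (D ×ˢ univ) := by
    ext z
    simp
  have tube₁ := (hD₁.prod_univ hD₂ (by linarith) hbD).image (by linarith) lipschitzWith_snocPt
    antilipschitzWith_snocPt one_le_two
  have tube₂ := (hD₂.prod_univ hs).image (by linarith) lipschitzWith_snocPt
    antilipschitzWith_snocPt
  rw [sub_add_cancel, ← htube] at tube₁ tube₂
  have plane₁ := hO₁.image (by positivity) isometry_snocPt_zero.lipschitz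
    isometry_snocPt_zero.antilipschitz le_rfl
  have plane₂ := hO₂.image (by positivity) isometry_snocPt_zero.lipschitz
    isometry_snocPt_zero.antilipschitz
  rintro S (rfl | rfl | rfl)
  · exact tube₁.ahlforsRegular (by positivity) tube₂
  · exact plane₁.ahlforsRegular (by positivity) plane₂
  · obtain ⟨b, hb⟩ := plane₂.union tube₂ (by positivity) (by positivity) (by positivity)
    exact (plane₁.union tube₁).ahlforsRegular (lt_min (by positivity) (by positivity)) hb

/-- If `O ⊆ ℝ^d` is open and `d`-regular and `D ⊆ ℝ^d` is `(d-1)`-regular, then the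
subsets `D × ℝ`, `O × {0}` and `O ⊥ D = (O × {0}) ∪ (D × ℝ)` of `ℝ^(d+1)` are all
`d`-regular with respect to `d`-dimensional Hausdorff measure on `ℝ^(d+1)`. -/
theorem perp_sets_d_regular (d : ℕ) (hd : 2 ≤ d)
    (O : Set (EuclideanSpace ℝ (Fin d))) (hO : IsOpen O)
    (aO bO : ℝ) (haO : 0 < aO) (habO : aO ≤ bO)
    (hOreg : ∀ x ∈ O, ∀ r : ℝ, 0 < r → r ≤ 1 →
      ENNReal.ofReal (aO * r ^ (d : ℝ)) ≤ μH[(d : ℝ)] (ball x r ∩ O) ∧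
      μH[(d : ℝ)] (ball x r ∩ O) ≤ ENNReal.ofReal (bO * r ^ (d : ℝ)))
    (D : Set (EuclideanSpace ℝ (Fin d)))
    (aD bD : ℝ) (haD : 0 < aD) (habD : aD ≤ bD)
    (hDreg : ∀ x ∈ D, ∀ r : ℝ, 0 < r → r ≤ 1 →
      ENNReal.ofReal (aD * r ^ ((d : ℝ) - 1)) ≤ μH[(d : ℝ) - 1] (ball x r ∩ D) ∧
      μH[(d : ℝ) - 1] (ball x r ∩ D) ≤ ENNReal.ofReal (bD * r ^ ((d : ℝ) - 1))) :
    ∀ S : Set (EuclideanSpace ℝ (Fin (d + 1))),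
      (S = {z | ∃ x ∈ D, ∃ t : ℝ, snocPt d x t = z} ∨
       S = {z | ∃ x ∈ O, snocPt d x 0 = z} ∨
       S = {z | ∃ x ∈ O, snocPt d x 0 = z} ∪ {z | ∃ x ∈ D, ∃ t : ℝ, snocPt d x t = z}) →
      ∃ a b : ℝ, 0 < a ∧ a ≤ b ∧
        ∀ z ∈ S, ∀ r : ℝ, 0 < r → r ≤ 1 →
          ENNReal.ofReal (a * r ^ (d : ℝ)) ≤ μH[(d : ℝ)] (ball z r ∩ S) ∧
          μH[(d : ℝ)] (ball z r ∩ S) ≤ ENNReal.ofReal (b * r ^ (d : ℝ)) :=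
  perp_sets_d_regular_general d hd O aO bO haO habO hOreg D aD bD haD habD hDreg
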